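/- (Quantum canonical transformation removing magnetic terms from quantum Stäckel operators.) For every r = 1,…,n and every smooth ψ : Ω_λ → ℂ, e^{F} · ĥ_r( e^{−F} ψ ) = ĥ̄_r ψ on Ω_λ; that is, conjugation by the unitary multiplication operator U = e^{F} transforms the quantum Stäckel operators with magnetic (vector) potentials into the corresponding quantum Stäckel operators with only scalar potentials. -/

import Mathlib

noncomputable section

open scoped BigOperators

namespace P3

/-- Partial derivative `∂f/∂λ_j` of a real-valued function on `ℝ^n`. -/
def pd (n : ℕ) (j : Fin n) (f : (Fin n → ℝ) → ℝ) (x : Fin n → ℝ) : ℝ :=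
  fderiv ℝ f x (Pi.single j 1)

/-- Partial derivative `∂f/∂λ_j` of a complex-valued function on `ℝ^n`. -/
def pdC (n : ℕ) (j : Fin n) (f : (Fin n → ℝ) → ℂ) (x : Fin n → ℝ) : ℂ :=
  fderiv ℝ f x (Pi.single j 1)

/-- The set of separation coordinates: pairwise distinct and nonzero `λ_j`. -/
def OmegaL (n : ℕ) : Set (Fin n → ℝ) :=
  {l | Function.Injective l ∧ ∀ j, l j ≠ 0}

/-- `Δ_j = Π_{k ≠ j} (λ_j − λ_k)`. -/
def Delta (n : ℕ) (l : Fin n → ℝ) (j : Fin n) : ℝ :=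
  ∏ k ∈ Finset.univ.erase j, (l j - l k)

/-- The `r`-th elementary symmetric polynomial of `λ_1, …, λ_n`. -/
def esym (n : ℕ) (r : ℕ) (l : Fin n → ℝ) : ℝ :=
  ∑ s ∈ Finset.powersetCard r Finset.univ, ∏ i ∈ s, l i

/-- `ρ_r(λ) = (−1)^r s_r(λ)`. -/
def rho (n : ℕ) (r : ℕ) (l : Fin n → ℝ) : ℝ := (-1) ^ r * esym n r l

/-- The diagonal entry `A_r^{jj} = −(∂ρ_r/∂λ_j) λ_j^m / Δ_j`. -/
def Adiag (n m : ℕ) (r : ℕ) (l : Fin n → ℝ) (j : Fin n) : ℝ :=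
  -(pd n j (rho n r) l) * (l j) ^ m / Delta n l j

/-- The basic separable vector potential `(P_r^{(γ)})^j = −A_r^{jj} λ_j^{γ−m}`. -/
def PdiagL (n m : ℕ) (γ : ℤ) (r : ℕ) (l : Fin n → ℝ) (j : Fin n) : ℝ :=
  -(Adiag n m r l j) * (l j) ^ (γ - (m : ℤ))

/-- The basic separable potential `V_r^{(α)} = Σ_j (∂ρ_r/∂λ_j) λ_j^α / Δ_j`. -/
def VL (n : ℕ) (α : ℤ) (r : ℕ) (l : Fin n → ℝ) : ℝ :=
  ∑ j : Fin n, pd n j (rho n r) l * (l j) ^ α / Delta n l j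

/-- The metrically contracted Christoffel symbol `Γ_j = −(m/2) λ_j⁻¹`. -/
def GammaL (n m : ℕ) (l : Fin n → ℝ) (j : Fin n) : ℝ :=
  -((m : ℝ) / 2) * (l j)⁻¹

/-- The quantum Stäckel operator `ĥ_r` with magnetic (vector) potentials, in
separation coordinates. -/
def hqB (n m : ℕ) (hb : ℝ) (Ia Ig : Finset ℤ) (c d : ℤ → ℝ) (r : ℕ)
    (ψ : (Fin n → ℝ) → ℂ) (l : Fin n → ℝ) : ℂ :=
  -((hb : ℂ) ^ 2 / 2) * ∑ j : Fin n, ((Adiag n m r l j : ℝ) : ℂ) *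
      (pdC n j (fun y => pdC n j ψ y) l - ((GammaL n m l j : ℝ) : ℂ) * pdC n j ψ l)
    - Complex.I * (hb : ℂ) * ∑ γ ∈ Ig, ∑ j : Fin n,
        ((d γ : ℝ) : ℂ) * ((PdiagL n m γ r l j : ℝ) : ℂ) *
          (pdC n j ψ l - (1 / 2 : ℂ) * ((GammaL n m l j : ℝ) : ℂ) * ψ l
            + (1 / 2 : ℂ) * (((γ - (m : ℤ) : ℤ) : ℝ) : ℂ) * (((l j)⁻¹ : ℝ) : ℂ) * ψ l)
    + (((∑ α ∈ Ia, c α * VL n α r l : ℝ)) : ℂ) * ψ l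

/-- The quantum Stäckel operator `ĥ̄_r` with only scalar potentials, in
separation coordinates. -/
def hqA (n m : ℕ) (hb : ℝ) (Ia Ig : Finset ℤ) (c d : ℤ → ℝ) (r : ℕ)
    (ψ : (Fin n → ℝ) → ℂ) (l : Fin n → ℝ) : ℂ :=
  -((hb : ℂ) ^ 2 / 2) * ∑ j : Fin n, ((Adiag n m r l j : ℝ) : ℂ) *
      (pdC n j (fun y => pdC n j ψ y) l - ((GammaL n m l j : ℝ) : ℂ) * pdC n j ψ l)
    + (((∑ α ∈ Ia, c α * VL n α r l
        + (1 / 2) * ∑ γ ∈ Ig, ∑ γ' ∈ Ig,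
            d γ * d γ' * VL n (γ + γ' - m) r l : ℝ)) : ℂ) * ψ l

/-- The generating function `F(λ)` of the quantum canonical transformation. -/
def Ffun (n m : ℕ) (Ig : Finset ℤ) (d : ℤ → ℝ) (hb : ℝ) (l : Fin n → ℝ) : ℂ :=
  -(Complex.I / (hb : ℂ)) * ∑ γ ∈ Ig,
    ((d γ / ((γ : ℝ) - (m : ℝ) + 1) : ℝ) : ℂ) *
      (((∑ j : Fin n, (l j) ^ (γ - (m : ℤ) + 1) : ℝ)) : ℂ)


/-! ### Auxiliary definitions and lemmas -/

/-- The partial derivative of `F` in the `j`-th direction. -/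
def gfun (n m : ℕ) (Ig : Finset ℤ) (d : ℤ → ℝ) (hb : ℝ) (j : Fin n)
    (y : Fin n → ℝ) : ℂ :=
  -(Complex.I / (hb : ℂ)) * ∑ γ ∈ Ig, ((d γ : ℝ) : ℂ) * (((y j) ^ (γ - (m : ℤ)) : ℝ) : ℂ)

lemma isOpen_OmegaL (n : ℕ) : IsOpen (OmegaL n) := by
  have h : OmegaL n =
      (⋂ (j : Fin n) (k : Fin n) (_ : j ≠ k), {l : Fin n → ℝ | l j ≠ l k}) ∩
        ⋂ j : Fin n, {l : Fin n → ℝ | l j ≠ 0} := by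
    ext l
    simp only [OmegaL, Set.mem_setOf_eq, Set.mem_inter_iff, Set.mem_iInter]
    constructor
    · rintro ⟨hinj, hne⟩
      exact ⟨fun j k hjk h => hjk (hinj h), hne⟩
    · rintro ⟨h1, h2⟩
      refine ⟨fun j k hjk => ?_, h2⟩
      by_contra hne
      exact h1 j k hne hjk
  rw [h]
  refine IsOpen.inter ?_ ?_
  · refine isOpen_iInter_of_finite fun j => isOpen_iInter_of_finite fun k =>
      isOpen_iInter_of_finite fun _ => ?_
    exact isOpen_ne_fun (continuous_apply j) (continuous_apply k)
  · refine isOpen_iInter_of_finite fun j => ?_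
    exact isOpen_ne_fun (continuous_apply j) continuous_const

lemma hasFDerivAt_zpow_apply (n : ℕ) (j : Fin n) (e : ℤ) (y : Fin n → ℝ) (hy : y j ≠ 0) :
    HasFDerivAt (fun y : Fin n → ℝ => (y j) ^ e)
      (((e : ℝ) * (y j) ^ (e - 1)) • (ContinuousLinearMap.proj j :
        (Fin n → ℝ) →L[ℝ] ℝ)) y := by
  have h1 : HasDerivAt (fun x : ℝ => x ^ e) ((e : ℝ) * (y j) ^ (e - 1)) (y j) :=
    hasDerivAt_zpow e (y j) (Or.inl hy)
  have h2 : HasFDerivAt (fun y : Fin n → ℝ => y j)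
      (ContinuousLinearMap.proj j : (Fin n → ℝ) →L[ℝ] ℝ) y :=
    (ContinuousLinearMap.proj j : (Fin n → ℝ) →L[ℝ] ℝ).hasFDerivAt
  have := h1.hasFDerivAt.comp y h2
  refine this.congr_fderiv ?_
  ext v
  simp [mul_comm]

lemma hasFDerivAt_Ffun (n m : ℕ) (Ig : Finset ℤ) (d : ℤ → ℝ) (hb : ℝ)
    (y : Fin n → ℝ) (hy : ∀ k, y k ≠ 0) :
    HasFDerivAt (Ffun n m Ig d hb)
      (-(Complex.I / (hb : ℂ)) • ∑ γ ∈ Ig, ((d γ / ((γ : ℝ) - (m : ℝ) + 1) : ℝ) : ℂ) •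
        (Complex.ofRealCLM.comp
          (∑ j : Fin n, ((((γ - (m : ℤ) + 1 : ℤ) : ℝ)) * (y j) ^ (γ - (m : ℤ))) •
            (ContinuousLinearMap.proj j : (Fin n → ℝ) →L[ℝ] ℝ)))) y := by
  have hin : ∀ γ ∈ Ig, HasFDerivAt
      (fun y : Fin n → ℝ => ((d γ / ((γ : ℝ) - (m : ℝ) + 1) : ℝ) : ℂ) *
        (((∑ j : Fin n, (y j) ^ (γ - (m : ℤ) + 1) : ℝ)) : ℂ))
      (((d γ / ((γ : ℝ) - (m : ℝ) + 1) : ℝ) : ℂ) •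
        (Complex.ofRealCLM.comp
          (∑ j : Fin n, ((((γ - (m : ℤ) + 1 : ℤ) : ℝ)) * (y j) ^ (γ - (m : ℤ))) •
            (ContinuousLinearMap.proj j : (Fin n → ℝ) →L[ℝ] ℝ)))) y := by
    intro γ _
    have hs : HasFDerivAt (fun y : Fin n → ℝ => (∑ j : Fin n, (y j) ^ (γ - (m : ℤ) + 1) : ℝ))
        (∑ j : Fin n, ((((γ - (m : ℤ) + 1 : ℤ) : ℝ)) * (y j) ^ (γ - (m : ℤ))) •
          (ContinuousLinearMap.proj j : (Fin n → ℝ) →L[ℝ] ℝ)) y := by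
      refine HasFDerivAt.fun_sum fun j _ => ?_
      simpa using hasFDerivAt_zpow_apply n j (γ - (m : ℤ) + 1) y (hy j)
    exact (Complex.ofRealCLM.hasFDerivAt.comp y hs).const_mul _
  exact (HasFDerivAt.fun_sum hin).const_mul (-(Complex.I / (hb : ℂ)))

lemma pdC_Ffun (n m : ℕ) (Ig : Finset ℤ) (d : ℤ → ℝ) (hb : ℝ)
    (hIg : ((m : ℤ) - 1) ∉ Ig)
    (j : Fin n) (y : Fin n → ℝ) (hy : ∀ k, y k ≠ 0) :
    pdC n j (Ffun n m Ig d hb) y = gfun n m Ig d hb j y := by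
  have h := (hasFDerivAt_Ffun n m Ig d hb y hy).fderiv
  rw [pdC, h]
  simp only [ContinuousLinearMap.smul_apply, smul_eq_mul, gfun,
    ContinuousLinearMap.sum_apply]
  congr 1
  refine Finset.sum_congr rfl fun γ hγ => ?_
  simp only [ContinuousLinearMap.smul_apply, ContinuousLinearMap.coe_comp',
    Function.comp_apply, ContinuousLinearMap.sum_apply, ContinuousLinearMap.proj_apply,
    smul_eq_mul]
  rw [Finset.sum_eq_single j (fun k _ hk => by simp [Pi.single_apply, hk]) (by simp)]
  have hz : γ - (m : ℤ) + 1 ≠ 0 := by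
    intro h0
    have : γ = (m : ℤ) - 1 := by omega
    rw [this] at hγ
    exact hIg hγ
  have hne : ((γ : ℂ) - (m : ℂ) + 1) ≠ 0 := by exact_mod_cast hz
  simp only [Complex.ofRealCLM_apply]
  push_cast
  rw [Pi.single_eq_same]
  field_simp
  simp

lemma hasFDerivAt_gfun (n m : ℕ) (Ig : Finset ℤ) (d : ℤ → ℝ) (hb : ℝ) (j : Fin n)
    (y : Fin n → ℝ) (hy : y j ≠ 0) :
    HasFDerivAt (gfun n m Ig d hb j)
      (-(Complex.I / (hb : ℂ)) • ∑ γ ∈ Ig, ((d γ : ℝ) : ℂ) •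
        (Complex.ofRealCLM.comp
          ((((( γ - (m : ℤ) : ℤ) : ℝ)) * (y j) ^ (γ - (m : ℤ) - 1)) •
            (ContinuousLinearMap.proj j : (Fin n → ℝ) →L[ℝ] ℝ)))) y := by
  have hin : ∀ γ ∈ Ig, HasFDerivAt
      (fun y : Fin n → ℝ => ((d γ : ℝ) : ℂ) * (((y j) ^ (γ - (m : ℤ)) : ℝ) : ℂ))
      (((d γ : ℝ) : ℂ) • (Complex.ofRealCLM.comp
        ((((( γ - (m : ℤ) : ℤ) : ℝ)) * (y j) ^ (γ - (m : ℤ) - 1)) •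
          (ContinuousLinearMap.proj j : (Fin n → ℝ) →L[ℝ] ℝ)))) y := by
    intro γ _
    exact ((Complex.ofRealCLM.hasFDerivAt.comp y
      (hasFDerivAt_zpow_apply n j (γ - (m : ℤ)) y hy))).const_mul _
  exact (HasFDerivAt.fun_sum hin).const_mul (-(Complex.I / (hb : ℂ)))

lemma pdC_gfun (n m : ℕ) (Ig : Finset ℤ) (d : ℤ → ℝ) (hb : ℝ) (j : Fin n)
    (y : Fin n → ℝ) (hy : y j ≠ 0) :
    pdC n j (gfun n m Ig d hb j) y =
      -(Complex.I / (hb : ℂ)) * ∑ γ ∈ Ig, ((d γ : ℝ) : ℂ) *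
        (((( γ - (m : ℤ) : ℤ) : ℝ) : ℂ)) * (((y j) ^ (γ - (m : ℤ) - 1) : ℝ) : ℂ) := by
  have h := (hasFDerivAt_gfun n m Ig d hb j y hy).fderiv
  rw [pdC, h]
  simp only [ContinuousLinearMap.smul_apply, smul_eq_mul, ContinuousLinearMap.sum_apply,
    ContinuousLinearMap.coe_comp', Function.comp_apply, ContinuousLinearMap.proj_apply,
    Pi.single_eq_same]
  congr 1
  refine Finset.sum_congr rfl fun γ hγ => ?_
  simp only [Complex.ofRealCLM_apply]
  push_cast
  ring

/-- Product rule with the exponential factor. -/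
lemma pdC_exp_mul (n m : ℕ) (Ig : Finset ℤ) (d : ℤ → ℝ) (hb : ℝ) (hIg : ((m : ℤ) - 1) ∉ Ig)
    (j : Fin n) (f : (Fin n → ℝ) → ℂ) (y : Fin n → ℝ) (hy : ∀ k, y k ≠ 0)
    (hf : DifferentiableAt ℝ f y) :
    pdC n j (fun z => Complex.exp (-(Ffun n m Ig d hb z)) * f z) y =
      Complex.exp (-(Ffun n m Ig d hb y)) *
        (pdC n j f y - gfun n m Ig d hb j y * f y) := by
  have hF := hasFDerivAt_Ffun n m Ig d hb y hy
  have hE : HasFDerivAt (fun z => Complex.exp (-(Ffun n m Ig d hb z)))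
      (Complex.exp (-(Ffun n m Ig d hb y)) • (-(fderiv ℝ (Ffun n m Ig d hb) y))) y := by
    rw [hF.fderiv]
    exact (hF.neg).cexp
  have hmul := hE.mul hf.hasFDerivAt
  rw [pdC]
  show (fderiv ℝ ((fun z => Complex.exp (-(Ffun n m Ig d hb z))) * f) y) (Pi.single j 1) = _
  rw [hmul.fderiv]
  simp only [ContinuousLinearMap.add_apply, ContinuousLinearMap.smul_apply,
    ContinuousLinearMap.neg_apply, ContinuousLinearMap.smulRight_apply, smul_eq_mul]
  have hpd : fderiv ℝ (Ffun n m Ig d hb) y (Pi.single j 1) = gfun n m Ig d hb j y :=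
    pdC_Ffun n m Ig d hb hIg j y hy
  rw [hpd, pdC]
  ring

/-- The purely algebraic step of the computation. -/
lemma algebra_step (n : ℕ) (Ig : Finset ℤ) (hbC : ℂ) (hhb : hbC ≠ 0)
    (a u D1 D2 : Fin n → ℂ) (dC cC : ℤ → ℂ) (t : ℤ → Fin n → ℂ) (ψl Cc : ℂ)
    (Pc : ℤ → Fin n → ℂ) (hPc : ∀ γ ∈ Ig, ∀ j, Pc γ j = -(a j) * t γ j)
    (g g' Γ : Fin n → ℂ)
    (hg : ∀ j, g j = -(Complex.I / hbC) * ∑ γ ∈ Ig, dC γ * t γ j)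
    (hg' : ∀ j, g' j = -(Complex.I / hbC) * (∑ γ ∈ Ig, dC γ * cC γ * t γ j) * u j)
    (V2 : ℤ → ℤ → ℂ)
    (hV : ∀ γ ∈ Ig, ∀ γ' ∈ Ig, V2 γ γ' = -∑ j, a j * t γ j * t γ' j) :
    -(hbC ^ 2 / 2) * ∑ j, a j *
        (D2 j - 2 * g j * D1 j + (g j ^ 2 - g' j) * ψl - Γ j * (D1 j - g j * ψl))
      - Complex.I * hbC * ∑ γ ∈ Ig, ∑ j, dC γ * Pc γ j *
          (D1 j - g j * ψl - (1 / 2) * Γ j * ψl + (1 / 2) * cC γ * u j * ψl)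
      + Cc * ψl
    = -(hbC ^ 2 / 2) * ∑ j, a j * (D2 j - Γ j * D1 j)
      + (Cc + (1 / 2) * ∑ γ ∈ Ig, ∑ γ' ∈ Ig, dC γ * dC γ' * V2 γ γ') * ψl := by
  have hVs : ∑ γ ∈ Ig, ∑ γ' ∈ Ig, dC γ * dC γ' * V2 γ γ'
      = ∑ j, -(a j) * (∑ γ ∈ Ig, dC γ * t γ j) ^ 2 := by
    have h1 : ∑ γ ∈ Ig, ∑ γ' ∈ Ig, dC γ * dC γ' * V2 γ γ'
        = ∑ γ ∈ Ig, ∑ γ' ∈ Ig, ∑ j, -(dC γ * t γ j * (dC γ' * t γ' j) * a j) := by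
      refine Finset.sum_congr rfl fun γ hγ => Finset.sum_congr rfl fun γ' hγ' => ?_
      rw [hV γ hγ γ' hγ', mul_neg, Finset.mul_sum, ← Finset.sum_neg_distrib]
      exact Finset.sum_congr rfl fun j _ => by ring
    have h2 : ∑ γ ∈ Ig, ∑ γ' ∈ Ig, ∑ j, -(dC γ * t γ j * (dC γ' * t γ' j) * a j)
        = ∑ j, ∑ γ ∈ Ig, ∑ γ' ∈ Ig, -(dC γ * t γ j * (dC γ' * t γ' j) * a j) :=
      calc ∑ γ ∈ Ig, ∑ γ' ∈ Ig, ∑ j, -(dC γ * t γ j * (dC γ' * t γ' j) * a j)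
          = ∑ γ ∈ Ig, ∑ j, ∑ γ' ∈ Ig, -(dC γ * t γ j * (dC γ' * t γ' j) * a j) :=
            Finset.sum_congr rfl fun γ _ => Finset.sum_comm
        _ = ∑ j, ∑ γ ∈ Ig, ∑ γ' ∈ Ig, -(dC γ * t γ j * (dC γ' * t γ' j) * a j) :=
            Finset.sum_comm
    rw [h1, h2]
    refine Finset.sum_congr rfl fun j _ => ?_
    rw [pow_two, Finset.sum_mul_sum, Finset.mul_sum]
    refine Finset.sum_congr rfl fun γ _ => ?_
    rw [Finset.mul_sum]
    exact Finset.sum_congr rfl fun γ' _ => by ring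
  have hN : ∀ j, ∑ γ ∈ Ig, dC γ * Pc γ j *
      (D1 j - g j * ψl - (1 / 2) * Γ j * ψl + (1 / 2) * cC γ * u j * ψl)
      = -(a j) * (∑ γ ∈ Ig, dC γ * t γ j) * (D1 j - g j * ψl - (1 / 2) * Γ j * ψl)
        - (1 / 2) * a j * u j * ψl * (∑ γ ∈ Ig, dC γ * cC γ * t γ j) := by
    intro j
    have h3 : ∀ γ ∈ Ig, dC γ * Pc γ j *
        (D1 j - g j * ψl - (1 / 2) * Γ j * ψl + (1 / 2) * cC γ * u j * ψl)
        = (-(a j) * (D1 j - g j * ψl - (1 / 2) * Γ j * ψl)) * (dC γ * t γ j)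
          + (-(1 / 2) * a j * u j * ψl) * (dC γ * cC γ * t γ j) := by
      intro γ hγ
      rw [hPc γ hγ j]; ring
    rw [Finset.sum_congr rfl h3, Finset.sum_add_distrib, ← Finset.mul_sum, ← Finset.mul_sum]
    ring
  have h4 : ∀ j : Fin n, -(hbC ^ 2 / 2) * (a j *
        (D2 j - 2 * g j * D1 j + (g j ^ 2 - g' j) * ψl - Γ j * (D1 j - g j * ψl)))
      - Complex.I * hbC *
        (-(a j) * (∑ γ ∈ Ig, dC γ * t γ j) * (D1 j - g j * ψl - (1 / 2) * Γ j * ψl)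
          - (1 / 2) * a j * u j * ψl * (∑ γ ∈ Ig, dC γ * cC γ * t γ j))
      = -(hbC ^ 2 / 2) * (a j * (D2 j - Γ j * D1 j))
        + (1 / 2) * (-(a j) * (∑ γ ∈ Ig, dC γ * t γ j) ^ 2) * ψl := by
    intro j
    rw [hg j, hg' j]
    generalize (∑ γ ∈ Ig, dC γ * t γ j) = S
    generalize (∑ γ ∈ Ig, dC γ * cC γ * t γ j) = S1
    have hI : Complex.I ^ 2 = -1 := Complex.I_sq
    set w := Complex.I / hbC with hw'
    have hw : hbC * w = Complex.I := by
      rw [hw']; exact mul_div_cancel₀ _ hhb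
    linear_combination (-(a j)*S*D1 j*hbC - (1/2)*(a j)*S^2*ψl*(hbC*w - Complex.I)
      - (1/2)*(a j)*S1*(u j)*ψl*hbC + (1/2)*(a j)*S*(Γ j)*ψl*hbC) * hw
      + ((1/2)*(a j)*S^2*ψl) * hI
  have key : -(hbC ^ 2 / 2) * ∑ j, a j *
        (D2 j - 2 * g j * D1 j + (g j ^ 2 - g' j) * ψl - Γ j * (D1 j - g j * ψl))
      - Complex.I * hbC * ∑ γ ∈ Ig, ∑ j, dC γ * Pc γ j *
          (D1 j - g j * ψl - (1 / 2) * Γ j * ψl + (1 / 2) * cC γ * u j * ψl)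
      = -(hbC ^ 2 / 2) * ∑ j, a j * (D2 j - Γ j * D1 j)
        + (1 / 2) * (∑ j, -(a j) * (∑ γ ∈ Ig, dC γ * t γ j) ^ 2) * ψl := by
    rw [Finset.sum_comm (s := Ig) (t := Finset.univ)]
    calc -(hbC ^ 2 / 2) * ∑ j, a j *
          (D2 j - 2 * g j * D1 j + (g j ^ 2 - g' j) * ψl - Γ j * (D1 j - g j * ψl))
        - Complex.I * hbC * ∑ j, ∑ γ ∈ Ig, dC γ * Pc γ j *
            (D1 j - g j * ψl - (1 / 2) * Γ j * ψl + (1 / 2) * cC γ * u j * ψl)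
        = ∑ j, (-(hbC ^ 2 / 2) * (a j *
            (D2 j - 2 * g j * D1 j + (g j ^ 2 - g' j) * ψl - Γ j * (D1 j - g j * ψl)))
          - Complex.I * hbC *
            (-(a j) * (∑ γ ∈ Ig, dC γ * t γ j) * (D1 j - g j * ψl - (1 / 2) * Γ j * ψl)
              - (1 / 2) * a j * u j * ψl * (∑ γ ∈ Ig, dC γ * cC γ * t γ j))) := by
          rw [Finset.mul_sum, Finset.mul_sum, ← Finset.sum_sub_distrib]
          exact Finset.sum_congr rfl fun j _ => by rw [hN j]
      _ = ∑ j, (-(hbC ^ 2 / 2) * (a j * (D2 j - Γ j * D1 j))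
            + (1 / 2) * (-(a j) * (∑ γ ∈ Ig, dC γ * t γ j) ^ 2) * ψl) :=
          Finset.sum_congr rfl fun j _ => h4 j
      _ = -(hbC ^ 2 / 2) * ∑ j, a j * (D2 j - Γ j * D1 j)
            + (1 / 2) * (∑ j, -(a j) * (∑ γ ∈ Ig, dC γ * t γ j) ^ 2) * ψl := by
          rw [Finset.sum_add_distrib, ← Finset.mul_sum]
          congr 1
          conv_rhs => rw [mul_assoc, Finset.sum_mul, Finset.mul_sum]
          exact Finset.sum_congr rfl fun j _ => by ring
  rw [hVs]
  linear_combination key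

/-- Conjugation by the unitary multiplication operator
`U = e^F` transforms the quantum Stäckel operators with magnetic potentials
into the corresponding quantum Stäckel operators with scalar potentials:
`e^F ĥ_r (e^{−F} ψ) = ĥ̄_r ψ` on `Ω_λ`. -/
theorem quantum_canonical_transformation_stackel (n m : ℕ) (hn : 1 ≤ n)
    (hm : m ≤ n + 1) (Ia Ig : Finset ℤ) (hIg : ((m : ℤ) - 1) ∉ Ig)
    (c d : ℤ → ℝ) (hb : ℝ) (hhb : hb ≠ 0)
    (r : ℕ) (hr : 1 ≤ r ∧ r ≤ n)
    (ψ : (Fin n → ℝ) → ℂ) (hψ : ContDiffOn ℝ (⊤ : ℕ∞) ψ (OmegaL n))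
    (l : Fin n → ℝ) (hl : l ∈ OmegaL n) :
    Complex.exp (Ffun n m Ig d hb l) *
        hqB n m hb Ia Ig c d r
          (fun y => Complex.exp (-(Ffun n m Ig d hb y)) * ψ y) l
      = hqA n m hb Ia Ig c d r ψ l := by
  have hOpen := isOpen_OmegaL n
  have hnhds : OmegaL n ∈ nhds l := hOpen.mem_nhds hl
  have hlj : ∀ k, l k ≠ 0 := hl.2
  have hbCne : (hb : ℂ) ≠ 0 := Complex.ofReal_ne_zero.mpr hhb
  have hψd : ∀ y ∈ OmegaL n, DifferentiableAt ℝ ψ y := fun y hy =>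
    ((hψ.differentiableOn (by simp)) y hy).differentiableAt (hOpen.mem_nhds hy)
  have hD1d : ∀ j : Fin n, DifferentiableAt ℝ (fun y => pdC n j ψ y) l := by
    intro j
    have hfd : ContDiffOn ℝ (⊤ : ℕ∞) (fderiv ℝ ψ) (OmegaL n) := hψ.fderiv_of_isOpen hOpen (by simp)
    have h2 : ContDiffOn ℝ (⊤ : ℕ∞) (fun y => fderiv ℝ ψ y (Pi.single j 1)) (OmegaL n) :=
      hfd.clm_apply contDiffOn_const
    exact ((h2.differentiableOn (by simp)) l hl).differentiableAt hnhds
  have hgd : ∀ (j : Fin n) (y : Fin n → ℝ), y j ≠ 0 →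
      DifferentiableAt ℝ (gfun n m Ig d hb j) y := fun j y hy =>
    (hasFDerivAt_gfun n m Ig d hb j y hy).differentiableAt
  have ha : ∀ (j : Fin n), ∀ y ∈ OmegaL n,
      pdC n j (fun z => Complex.exp (-(Ffun n m Ig d hb z)) * ψ z) y
        = Complex.exp (-(Ffun n m Ig d hb y)) *
            (pdC n j ψ y - gfun n m Ig d hb j y * ψ y) := fun j y hy =>
    pdC_exp_mul n m Ig d hb hIg j ψ y hy.2 (hψd y hy)
  have hb2 : ∀ j : Fin n,
      pdC n j (fun y => pdC n j (fun z => Complex.exp (-(Ffun n m Ig d hb z)) * ψ z) y) l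
        = Complex.exp (-(Ffun n m Ig d hb l)) *
            (pdC n j (fun y => pdC n j ψ y) l
              - 2 * gfun n m Ig d hb j l * pdC n j ψ l
              + ((gfun n m Ig d hb j l) ^ 2 - pdC n j (gfun n m Ig d hb j) l) * ψ l) := by
    intro j
    have heq : (fun y => pdC n j (fun z => Complex.exp (-(Ffun n m Ig d hb z)) * ψ z) y)
        =ᶠ[nhds l] (fun y => Complex.exp (-(Ffun n m Ig d hb y)) *
            (pdC n j ψ y - gfun n m Ig d hb j y * ψ y)) :=
      Filter.eventuallyEq_of_mem hnhds (fun y hy => ha j y hy)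
    have e1 : pdC n j
        (fun y => pdC n j (fun z => Complex.exp (-(Ffun n m Ig d hb z)) * ψ z) y) l
        = pdC n j (fun y => Complex.exp (-(Ffun n m Ig d hb y)) *
            (pdC n j ψ y - gfun n m Ig d hb j y * ψ y)) l := by
      show (fderiv ℝ (fun y =>
          pdC n j (fun z => Complex.exp (-(Ffun n m Ig d hb z)) * ψ z) y) l) (Pi.single j 1)
        = (fderiv ℝ (fun y => Complex.exp (-(Ffun n m Ig d hb y)) *
            (pdC n j ψ y - gfun n m Ig d hb j y * ψ y)) l) (Pi.single j 1)
      rw [heq.fderiv_eq]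
    have hfdiff : DifferentiableAt ℝ
        (fun y => pdC n j ψ y - gfun n m Ig d hb j y * ψ y) l :=
      (hD1d j).sub ((hgd j l (hlj j)).mul (hψd l hl))
    have e2 := pdC_exp_mul n m Ig d hb hIg j
      (fun y => pdC n j ψ y - gfun n m Ig d hb j y * ψ y) l hlj hfdiff
    have e3 : pdC n j (fun y => pdC n j ψ y - gfun n m Ig d hb j y * ψ y) l
        = pdC n j (fun y => pdC n j ψ y) l
          - (gfun n m Ig d hb j l * pdC n j ψ l + ψ l * pdC n j (gfun n m Ig d hb j) l) := by
      show (fderiv ℝ (fun y => pdC n j ψ y - gfun n m Ig d hb j y * ψ y) l) (Pi.single j 1) = _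
      rw [fderiv_fun_sub (hD1d j) ((hgd j l (hlj j)).fun_mul (hψd l hl)),
        fderiv_fun_mul (hgd j l (hlj j)) (hψd l hl)]
      simp only [ContinuousLinearMap.coe_sub', Pi.sub_apply, ContinuousLinearMap.add_apply,
        ContinuousLinearMap.smul_apply, smul_eq_mul]
      rfl
    rw [e1, e2, e3]
    ring
  -- Step A : factor out the exponential
  have h1sum : ∑ j : Fin n, ((Adiag n m r l j : ℝ) : ℂ) *
        (pdC n j (fun y => pdC n j (fun z => Complex.exp (-(Ffun n m Ig d hb z)) * ψ z) y) l
          - ((GammaL n m l j : ℝ) : ℂ) *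
            pdC n j (fun z => Complex.exp (-(Ffun n m Ig d hb z)) * ψ z) l)
      = Complex.exp (-(Ffun n m Ig d hb l)) * ∑ j : Fin n, ((Adiag n m r l j : ℝ) : ℂ) *
          (pdC n j (fun y => pdC n j ψ y) l
            - 2 * gfun n m Ig d hb j l * pdC n j ψ l
            + ((gfun n m Ig d hb j l) ^ 2 - pdC n j (gfun n m Ig d hb j) l) * ψ l
            - ((GammaL n m l j : ℝ) : ℂ) *
              (pdC n j ψ l - gfun n m Ig d hb j l * ψ l)) := by
    rw [Finset.mul_sum]
    refine Finset.sum_congr rfl fun j _ => ?_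
    rw [hb2 j, ha j l hl]
    ring
  have h2sum : ∑ γ ∈ Ig, ∑ j : Fin n,
        ((d γ : ℝ) : ℂ) * ((PdiagL n m γ r l j : ℝ) : ℂ) *
          (pdC n j (fun z => Complex.exp (-(Ffun n m Ig d hb z)) * ψ z) l
            - (1 / 2 : ℂ) * ((GammaL n m l j : ℝ) : ℂ) *
                ((fun y => Complex.exp (-(Ffun n m Ig d hb y)) * ψ y) l)
            + (1 / 2 : ℂ) * (((γ - (m : ℤ) : ℤ) : ℝ) : ℂ) * (((l j)⁻¹ : ℝ) : ℂ) *
                ((fun y => Complex.exp (-(Ffun n m Ig d hb y)) * ψ y) l))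
      = Complex.exp (-(Ffun n m Ig d hb l)) * ∑ γ ∈ Ig, ∑ j : Fin n,
          ((d γ : ℝ) : ℂ) * ((PdiagL n m γ r l j : ℝ) : ℂ) *
            (pdC n j ψ l - gfun n m Ig d hb j l * ψ l
              - (1 / 2 : ℂ) * ((GammaL n m l j : ℝ) : ℂ) * ψ l
              + (1 / 2 : ℂ) * (((γ - (m : ℤ) : ℤ) : ℝ) : ℂ) * (((l j)⁻¹ : ℝ) : ℂ) * ψ l) := by
    rw [Finset.mul_sum]
    refine Finset.sum_congr rfl fun γ _ => ?_
    rw [Finset.mul_sum]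
    refine Finset.sum_congr rfl fun j _ => ?_
    rw [ha j l hl]
    show ((d γ : ℝ) : ℂ) * ((PdiagL n m γ r l j : ℝ) : ℂ) *
        (Complex.exp (-(Ffun n m Ig d hb l)) *
            (pdC n j ψ l - gfun n m Ig d hb j l * ψ l)
          - (1 / 2 : ℂ) * ((GammaL n m l j : ℝ) : ℂ) *
              (Complex.exp (-(Ffun n m Ig d hb l)) * ψ l)
          + (1 / 2 : ℂ) * (((γ - (m : ℤ) : ℤ) : ℝ) : ℂ) * (((l j)⁻¹ : ℝ) : ℂ) *
              (Complex.exp (-(Ffun n m Ig d hb l)) * ψ l)) = _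
    ring
  have hstepA : hqB n m hb Ia Ig c d r
      (fun y => Complex.exp (-(Ffun n m Ig d hb y)) * ψ y) l
      = Complex.exp (-(Ffun n m Ig d hb l)) *
        (-((hb : ℂ) ^ 2 / 2) * ∑ j : Fin n, ((Adiag n m r l j : ℝ) : ℂ) *
            (pdC n j (fun y => pdC n j ψ y) l
              - 2 * gfun n m Ig d hb j l * pdC n j ψ l
              + ((gfun n m Ig d hb j l) ^ 2 - pdC n j (gfun n m Ig d hb j) l) * ψ l
              - ((GammaL n m l j : ℝ) : ℂ) *
                (pdC n j ψ l - gfun n m Ig d hb j l * ψ l))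
          - Complex.I * (hb : ℂ) * ∑ γ ∈ Ig, ∑ j : Fin n,
              ((d γ : ℝ) : ℂ) * ((PdiagL n m γ r l j : ℝ) : ℂ) *
                (pdC n j ψ l - gfun n m Ig d hb j l * ψ l
                  - (1 / 2 : ℂ) * ((GammaL n m l j : ℝ) : ℂ) * ψ l
                  + (1 / 2 : ℂ) * (((γ - (m : ℤ) : ℤ) : ℝ) : ℂ) * (((l j)⁻¹ : ℝ) : ℂ) * ψ l)
          + (((∑ α ∈ Ia, c α * VL n α r l : ℝ)) : ℂ) * ψ l) := by
    simp only [hqB]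
    rw [h1sum, h2sum]
    show _ + (((∑ α ∈ Ia, c α * VL n α r l : ℝ)) : ℂ) *
        (Complex.exp (-(Ffun n m Ig d hb l)) * ψ l) = _
    ring
  have hEinv : Complex.exp (Ffun n m Ig d hb l) *
      Complex.exp (-(Ffun n m Ig d hb l)) = 1 := by
    rw [← Complex.exp_add]
    simp
  rw [hstepA, ← mul_assoc, hEinv, one_mul]
  -- Step B : the algebraic identity
  have hPc : ∀ γ ∈ Ig, ∀ j : Fin n, ((PdiagL n m γ r l j : ℝ) : ℂ) =
      -(((Adiag n m r l j : ℝ) : ℂ)) * ((l j : ℝ) : ℂ) ^ (γ - (m : ℤ)) := by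
    intro γ _ j
    rw [PdiagL]
    push_cast [Complex.ofReal_zpow]
    ring
  have hg : ∀ j : Fin n, gfun n m Ig d hb j l =
      -(Complex.I / (hb : ℂ)) * ∑ γ ∈ Ig, ((d γ : ℝ) : ℂ) *
        ((l j : ℝ) : ℂ) ^ (γ - (m : ℤ)) := by
    intro j
    rw [gfun]
    congr 1
    refine Finset.sum_congr rfl fun γ _ => ?_
    rw [Complex.ofReal_zpow]
  have hg' : ∀ j : Fin n, pdC n j (gfun n m Ig d hb j) l =
      -(Complex.I / (hb : ℂ)) *
        (∑ γ ∈ Ig, ((d γ : ℝ) : ℂ) * (((γ - (m : ℤ) : ℤ) : ℝ) : ℂ) *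
          ((l j : ℝ) : ℂ) ^ (γ - (m : ℤ))) * (((l j)⁻¹ : ℝ) : ℂ) := by
    intro j
    rw [pdC_gfun n m Ig d hb j l (hlj j)]
    have hterm : ∀ γ ∈ Ig, ((d γ : ℝ) : ℂ) * (((γ - (m : ℤ) : ℤ) : ℝ) : ℂ) *
        (((l j) ^ (γ - (m : ℤ) - 1) : ℝ) : ℂ)
        = (((d γ : ℝ) : ℂ) * (((γ - (m : ℤ) : ℤ) : ℝ) : ℂ) *
            ((l j : ℝ) : ℂ) ^ (γ - (m : ℤ))) * (((l j)⁻¹ : ℝ) : ℂ) := by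
      intro γ _
      rw [zpow_sub_one₀ (hlj j)]
      push_cast [Complex.ofReal_zpow]
      ring
    rw [Finset.sum_congr rfl hterm, ← Finset.sum_mul]
    ring
  have hV : ∀ γ ∈ Ig, ∀ γ' ∈ Ig, ((VL n (γ + γ' - m) r l : ℝ) : ℂ) =
      -∑ j : Fin n, ((Adiag n m r l j : ℝ) : ℂ) *
        (((l j : ℝ) : ℂ) ^ (γ - (m : ℤ))) * (((l j : ℝ) : ℂ) ^ (γ' - (m : ℤ))) := by
    intro γ _ γ' _
    rw [VL]
    push_cast [Complex.ofReal_zpow]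
    rw [← Finset.sum_neg_distrib]
    refine Finset.sum_congr rfl fun j _ => ?_
    have hlC : ((l j : ℝ) : ℂ) ≠ 0 := Complex.ofReal_ne_zero.mpr (hlj j)
    have hpow : ((l j : ℝ) : ℂ) ^ (γ + γ' - (m : ℤ)) =
        ((l j : ℝ) : ℂ) ^ (m : ℕ) *
          (((l j : ℝ) : ℂ) ^ (γ - (m : ℤ)) * ((l j : ℝ) : ℂ) ^ (γ' - (m : ℤ))) := by
      rw [← zpow_natCast ((l j : ℝ) : ℂ) m, ← zpow_add₀ hlC, ← zpow_add₀ hlC]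
      congr 1
      ring
    rw [Adiag, hpow]
    push_cast
    ring
  have hscal : (((∑ α ∈ Ia, c α * VL n α r l
        + (1 / 2) * ∑ γ ∈ Ig, ∑ γ' ∈ Ig,
            d γ * d γ' * VL n (γ + γ' - m) r l : ℝ)) : ℂ)
      = (((∑ α ∈ Ia, c α * VL n α r l : ℝ)) : ℂ)
        + (1 / 2) * ∑ γ ∈ Ig, ∑ γ' ∈ Ig,
            ((d γ : ℝ) : ℂ) * ((d γ' : ℝ) : ℂ) * ((VL n (γ + γ' - m) r l : ℝ) : ℂ) := by
    push_cast
    ring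
  have hAlg := algebra_step n Ig (hb : ℂ) hbCne
    (fun j => ((Adiag n m r l j : ℝ) : ℂ))
    (fun j => (((l j)⁻¹ : ℝ) : ℂ))
    (fun j => pdC n j ψ l)
    (fun j => pdC n j (fun y => pdC n j ψ y) l)
    (fun γ => ((d γ : ℝ) : ℂ))
    (fun γ => (((γ - (m : ℤ) : ℤ) : ℝ) : ℂ))
    (fun γ j => ((l j : ℝ) : ℂ) ^ (γ - (m : ℤ)))
    (ψ l)
    (((∑ α ∈ Ia, c α * VL n α r l : ℝ)) : ℂ)
    (fun γ j => ((PdiagL n m γ r l j : ℝ) : ℂ)) hPc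
    (fun j => gfun n m Ig d hb j l)
    (fun j => pdC n j (gfun n m Ig d hb j) l)
    (fun j => ((GammaL n m l j : ℝ) : ℂ)) hg hg'
    (fun γ γ' => ((VL n (γ + γ' - m) r l : ℝ) : ℂ)) hV
  simp only [hqA]
  rw [hscal]
  exact hAlg


end P3
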